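/- Fix integers ℓ ≥ 2 and k ≥ 2, and consider the instance with ℓ flow-shop jobs each of processing time 1/(ℓ−1), and k+1 open-shop jobs: one of processing time 1 and k of processing time 1/(k−1) each. Then there exists a feasible schedule with makespan exactly P(F) + Q(O) = 3 + 1/(ℓ−1) + 1/(k−1); since every feasible schedule has makespan at least P(F) + Q(O), this schedule is optimal. -/

import Mathlib

open Finset

noncomputable section

/-- Processing time of a job: `p` on flow-shop jobs, `q` otherwise. -/
def jobTime {J : Type*} [DecidableEq J] (F : Finset J) (p q : J → ℝ) (j : J) : ℝ :=
  if j ∈ F then p j else q j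

/-- Feasibility of a schedule given by start times `S j i` of job `j` on machine `i`
(machines `M1, M2, M3` are machines `0, 1, 2`):
all start times are nonnegative, on each machine the open processing intervals of
distinct jobs are pairwise disjoint, for each job the open processing intervals on the
three machines are pairwise disjoint, and each flow-shop job goes through
`M1`, `M2`, `M3` in this order. -/
def Feasible {J : Type*} [DecidableEq J] (F O : Finset J) (p q : J → ℝ)
    (S : J → Fin 3 → ℝ) : Prop :=
  (∀ j ∈ F ∪ O, ∀ i : Fin 3, 0 ≤ S j i) ∧
  (∀ i : Fin 3, ∀ j ∈ F ∪ O, ∀ k ∈ F ∪ O, j ≠ k →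
    S j i + jobTime F p q j ≤ S k i ∨ S k i + jobTime F p q k ≤ S j i) ∧
  (∀ j ∈ F ∪ O, ∀ i i' : Fin 3, i ≠ i' →
    S j i + jobTime F p q j ≤ S j i' ∨ S j i' + jobTime F p q j ≤ S j i) ∧
  (∀ j ∈ F, S j 0 + p j ≤ S j 1 ∧ S j 1 + p j ≤ S j 2)

/-- Makespan: supremum of all completion times of the jobs of `F ∪ O`. -/
def makespan {J : Type*} [DecidableEq J] (F O : Finset J) (p q : J → ℝ)
    (S : J → Fin 3 → ℝ) : ℝ :=
  sSup {x : ℝ | ∃ j ∈ F ∪ O, ∃ i : Fin 3, x = S j i + jobTime F p q j}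

/-- The tight-example instance: `ℓ` flow-shop jobs of processing time `1/(ℓ−1)` and
`k+1` open-shop jobs, one of processing time `1` and `k` of processing time `1/(k−1)`. -/
def tightF (ℓ k : ℕ) : Finset (Fin ℓ ⊕ Fin (k + 1)) := Finset.univ.image Sum.inl

def tightO (ℓ k : ℕ) : Finset (Fin ℓ ⊕ Fin (k + 1)) := Finset.univ.image Sum.inr

def tightp (ℓ k : ℕ) : (Fin ℓ ⊕ Fin (k + 1)) → ℝ := fun _ => 1 / ((ℓ : ℝ) - 1)

def tightq (ℓ k : ℕ) : (Fin ℓ ⊕ Fin (k + 1)) → ℝ :=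
  Sum.elim (fun _ => 1) (fun i => if i = 0 then 1 else 1 / ((k : ℝ) - 1))

/-!
Split the jobs into three blocks: the flow-shop jobs (total length `1 + 1/(ℓ-1)`), the `k`
short open-shop jobs (total `1 + 1/(k-1)`) and the long open-shop job (length `1`). Machine
`M1` runs the blocks in the order flow, short, long; `M2` in the order long, flow, short; `M3`
in the order short, long, flow; within a block the jobs keep the same order on every machine.
No machine is ever idle, so all three finish at `P(F) + Q(O)`. The flow jobs are processed in
the order `M1, M2, M3` because their block starts `1` and then `1 + 1/(k-1)` later on the next
machine while each of them has length at most `1`, and the three operations of an open-shop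
job lie in different blocks. Conversely, `M1` alone has to process all jobs.
-/

def Apart (x t y u : ℝ) : Prop := x + t ≤ y ∨ y + u ≤ x

lemma Apart.symm {x t y u : ℝ} (h : Apart x t y u) : Apart y u x t := Or.symm h

lemma Apart.disjoint_Ioo {x t y u : ℝ} (h : Apart x t y u) :
    Disjoint (Set.Ioo x (x + t)) (Set.Ioo y (y + u)) := by
  rw [Set.Ioo_disjoint_Ioo]
  rcases h with h | h
  · exact (min_le_left _ _).trans (h.trans (le_max_right _ _))
  · exact (min_le_right _ _).trans (h.trans (le_max_left _ _))

lemma sum_le_of_pairwiseDisjoint_Ioo {ι : Type*} (X : Finset ι) (a t : ι → ℝ) {M : ℝ}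
    (hM : 0 ≤ M) (ht : ∀ j ∈ X, 0 ≤ t j) (hsub : ∀ j ∈ X, 0 ≤ a j ∧ a j + t j ≤ M)
    (hd : (X : Set ι).PairwiseDisjoint fun j => Set.Ioo (a j) (a j + t j)) :
    ∑ j ∈ X, t j ≤ M := by
  have hsubset : (⋃ j ∈ X, Set.Ioo (a j) (a j + t j)) ⊆ Set.Icc 0 M :=
    Set.iUnion₂_subset fun j hj =>
      Set.Ioo_subset_Icc_self.trans (Set.Icc_subset_Icc (hsub j hj).1 (hsub j hj).2)
  have hvol := MeasureTheory.measure_mono (μ := MeasureTheory.volume) hsubset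
  rw [MeasureTheory.measure_biUnion_finset hd fun _ _ => measurableSet_Ioo] at hvol
  simp only [Real.volume_Ioo, add_sub_cancel_left, Real.volume_Icc, sub_zero] at hvol
  rwa [← ENNReal.ofReal_sum_of_nonneg ht, ENNReal.ofReal_le_ofReal_iff hM] at hvol

section Schedules

variable {J : Type*} [DecidableEq J] {F O : Finset J} {p q : J → ℝ} {S : J → Fin 3 → ℝ}

lemma jobTime_nonneg (hp : ∀ j ∈ F, 0 ≤ p j) (hq : ∀ j ∈ O, 0 ≤ q j) {j : J}
    (hj : j ∈ F ∪ O) : 0 ≤ jobTime F p q j := by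
  unfold jobTime
  split_ifs with hF
  · exact hp j hF
  · exact hq j ((mem_union.mp hj).resolve_left hF)

lemma sum_jobTime_union (hFO : Disjoint F O) :
    ∑ j ∈ F ∪ O, jobTime F p q j = ∑ j ∈ F, p j + ∑ j ∈ O, q j := by
  rw [sum_union hFO]
  congr 1
  · exact sum_congr rfl fun j hj => if_pos hj
  · exact sum_congr rfl fun j hj => if_neg (disjoint_right.mp hFO hj)

lemma completionTimes_bddAbove :
    BddAbove {x : ℝ | ∃ j ∈ F ∪ O, ∃ i : Fin 3, x = S j i + jobTime F p q j} := by
  refine ((F ∪ O).finite_toSet.image2 (fun j i => S j i + jobTime F p q j)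
    (Set.finite_univ (α := Fin 3))).bddAbove.mono ?_
  rintro x ⟨j, hj, i, rfl⟩
  exact ⟨j, hj, i, Set.mem_univ i, rfl⟩

lemma le_makespan {j : J} (hj : j ∈ F ∪ O) (i : Fin 3) :
    S j i + jobTime F p q j ≤ makespan F O p q S :=
  le_csSup completionTimes_bddAbove ⟨j, hj, i, rfl⟩

lemma makespan_eq_of_isGreatest {T : ℝ}
    (hT : ∃ j ∈ F ∪ O, ∃ i : Fin 3, S j i + jobTime F p q j = T)
    (hle : ∀ j ∈ F ∪ O, ∀ i : Fin 3, S j i + jobTime F p q j ≤ T) :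
    makespan F O p q S = T := by
  refine IsGreatest.csSup_eq ⟨?_, ?_⟩
  · obtain ⟨j, hj, i, h⟩ := hT
    exact ⟨j, hj, i, h.symm⟩
  · rintro x ⟨j, hj, i, rfl⟩
    exact hle j hj i

lemma sum_add_sum_le_makespan (hFO : Disjoint F O) (hp : ∀ j ∈ F, 0 ≤ p j)
    (hq : ∀ j ∈ O, 0 ≤ q j) (hS : Feasible F O p q S) :
    ∑ j ∈ F, p j + ∑ j ∈ O, q j ≤ makespan F O p q S := by
  obtain ⟨hstart, hmachine, -, -⟩ := hS
  have hM : 0 ≤ makespan F O p q S := Real.sSup_nonneg fun x ⟨j, hj, i, hx⟩ =>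
    hx ▸ add_nonneg (hstart j hj i) (jobTime_nonneg hp hq hj)
  rw [← sum_jobTime_union hFO]
  exact sum_le_of_pairwiseDisjoint_Ioo _ (S · 0) _ hM (fun j hj => jobTime_nonneg hp hq hj)
    (fun j hj => ⟨hstart j hj 0, le_makespan hj 0⟩)
    fun j hj j' hj' hne => Apart.disjoint_Ioo (hmachine 0 j hj j' hj' hne)

end Schedules

def slot (n : ℕ) (a : Fin n) : ℝ := a * (1 / ((n : ℝ) - 1))

section Slot

variable {n : ℕ}

lemma one_div_cast_sub_one_nonneg (hn : 0 < n) : 0 ≤ 1 / ((n : ℝ) - 1) := by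
  have : (1 : ℝ) ≤ n := by exact_mod_cast hn
  exact one_div_nonneg.mpr (by linarith)

lemma one_div_cast_sub_one_mem_Ioc (hn : 2 ≤ n) : 1 / ((n : ℝ) - 1) ∈ Set.Ioc 0 1 := by
  have : (2 : ℝ) ≤ n := by exact_mod_cast hn
  exact ⟨one_div_pos.mpr (by linarith), (div_le_one₀ (by linarith)).mpr (by linarith)⟩

lemma slot_nonneg (a : Fin n) : 0 ≤ slot n a :=
  mul_nonneg a.val.cast_nonneg (one_div_cast_sub_one_nonneg a.pos)

lemma slot_le_one (a : Fin n) : slot n a ≤ 1 := by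
  have ha : (a : ℝ) ≤ n - 1 := by
    have : (a : ℝ) + 1 ≤ n := by exact_mod_cast a.isLt
    linarith
  rw [slot, mul_one_div]
  exact div_le_one_of_le₀ ha ((a.val.cast_nonneg).trans ha)

lemma slot_add_le {a b : Fin n} (h : a < b) : slot n a + 1 / ((n : ℝ) - 1) ≤ slot n b := by
  have hab : (a : ℝ) + 1 ≤ b := by exact_mod_cast h
  calc slot n a + 1 / ((n : ℝ) - 1) = (a + 1) * (1 / ((n : ℝ) - 1)) := by rw [slot]; ring
    _ ≤ slot n b := mul_le_mul_of_nonneg_right hab (one_div_cast_sub_one_nonneg a.pos)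

end Slot

def tightSchedule (ℓ k : ℕ) : Fin ℓ ⊕ Fin (k + 1) → Fin 3 → ℝ
  | .inl a => ![slot ℓ a, 1 + slot ℓ a, 2 + 1 / ((k : ℝ) - 1) + slot ℓ a]
  | .inr b => Fin.cases
      ![2 + 1 / ((ℓ : ℝ) - 1) + 1 / ((k : ℝ) - 1), 0, 1 + 1 / ((k : ℝ) - 1)]
      (fun c => ![1 + 1 / ((ℓ : ℝ) - 1) + slot k c, 2 + 1 / ((ℓ : ℝ) - 1) + slot k c,
        slot k c]) b

section TightInstance

variable {ℓ k : ℕ}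

lemma jobTime_tight_inl (a : Fin ℓ) :
    jobTime (tightF ℓ k) (tightp ℓ k) (tightq ℓ k) (.inl a) = 1 / ((ℓ : ℝ) - 1) := by
  simp [jobTime, tightF, tightp]

lemma jobTime_tight_inr_zero :
    jobTime (tightF ℓ k) (tightp ℓ k) (tightq ℓ k) (.inr 0) = 1 := by
  simp [jobTime, tightF, tightq]

lemma jobTime_tight_inr_succ (c : Fin k) :
    jobTime (tightF ℓ k) (tightp ℓ k) (tightq ℓ k) (.inr c.succ) = 1 / ((k : ℝ) - 1) := by
  simp [jobTime, tightF, tightq]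

local notation "τ" => jobTime (tightF ℓ k) (tightp ℓ k) (tightq ℓ k)

lemma tightSchedule_mem (hℓ : 2 ≤ ℓ) (hk : 2 ≤ k) (j : Fin ℓ ⊕ Fin (k + 1))
    (i : Fin 3) :
    0 ≤ tightSchedule ℓ k j i ∧
      tightSchedule ℓ k j i + τ j ≤ 3 + 1 / ((ℓ : ℝ) - 1) + 1 / ((k : ℝ) - 1) := by
  obtain ⟨hs, hs1⟩ := one_div_cast_sub_one_mem_Ioc hℓ
  obtain ⟨hr, hr1⟩ := one_div_cast_sub_one_mem_Ioc hk
  rcases j with a | b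
  · have := slot_nonneg a; have := slot_le_one a
    fin_cases i <;> constructor <;> simp only [tightSchedule, Fin.zero_eta, Fin.mk_one,
        Fin.reduceFinMk, Matrix.cons_val, jobTime_tight_inl] <;> linarith
  · cases b using Fin.cases with
    | zero => fin_cases i <;> constructor <;> simp only [tightSchedule, Fin.zero_eta, Fin.mk_one,
        Fin.reduceFinMk, Fin.cases_zero, Matrix.cons_val, jobTime_tight_inr_zero] <;> linarith
    | succ c =>
      have := slot_nonneg c; have := slot_le_one c
      fin_cases i <;> constructor <;> simp only [tightSchedule, Fin.zero_eta, Fin.mk_one,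
          Fin.reduceFinMk, Fin.cases_succ, Matrix.cons_val, jobTime_tight_inr_succ] <;> linarith

lemma tightSchedule_apart_self (hℓ : 2 ≤ ℓ) (hk : 2 ≤ k) (j : Fin ℓ ⊕ Fin (k + 1))
    {i i' : Fin 3} (hii' : i ≠ i') :
    Apart (tightSchedule ℓ k j i) (τ j) (tightSchedule ℓ k j i') (τ j) := by
  obtain ⟨hs, hs1⟩ := one_div_cast_sub_one_mem_Ioc hℓ
  obtain ⟨hr, hr1⟩ := one_div_cast_sub_one_mem_Ioc hk
  rcases j with a | b
  · fin_cases i <;> fin_cases i' <;> simp only [Apart, tightSchedule, Fin.zero_eta, Fin.mk_one,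
      Fin.reduceFinMk, Matrix.cons_val, jobTime_tight_inl, ne_eq, not_true_eq_false] at hii' ⊢ <;>
      first | (left; linarith) | (right; linarith)
  · cases b using Fin.cases with
    | zero =>
      fin_cases i <;> fin_cases i' <;> simp only [Apart, tightSchedule, Fin.zero_eta, Fin.mk_one,
          Fin.reduceFinMk, Fin.cases_zero, Matrix.cons_val, jobTime_tight_inr_zero, ne_eq,
          not_true_eq_false] at hii' ⊢ <;>
        first | (left; linarith) | (right; linarith)
    | succ c =>
      have := slot_nonneg c; have := slot_le_one c
      fin_cases i <;> fin_cases i' <;> simp only [Apart, tightSchedule, Fin.zero_eta, Fin.mk_one,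
          Fin.reduceFinMk, Fin.cases_succ, Matrix.cons_val, jobTime_tight_inr_succ, ne_eq,
          not_true_eq_false] at hii' ⊢ <;>
        first | (left; linarith) | (right; linarith)

lemma tightSchedule_apart_flow_flow (i : Fin 3) {a a' : Fin ℓ} (h : a < a') :
    Apart (tightSchedule ℓ k (.inl a) i) (τ (.inl a))
      (tightSchedule ℓ k (.inl a') i) (τ (.inl a')) := by
  have := slot_add_le h
  left
  fin_cases i <;> simp only [tightSchedule, Fin.zero_eta, Fin.mk_one, Fin.reduceFinMk,
      Matrix.cons_val, jobTime_tight_inl] <;> linarith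

lemma tightSchedule_apart_flow_open (hℓ : 2 ≤ ℓ) (hk : 2 ≤ k) (i : Fin 3) (a : Fin ℓ)
    (b : Fin (k + 1)) :
    Apart (tightSchedule ℓ k (.inl a) i) (τ (.inl a))
      (tightSchedule ℓ k (.inr b) i) (τ (.inr b)) := by
  obtain ⟨hs, hs1⟩ := one_div_cast_sub_one_mem_Ioc hℓ
  obtain ⟨hr, hr1⟩ := one_div_cast_sub_one_mem_Ioc hk
  have := slot_nonneg a; have := slot_le_one a
  cases b using Fin.cases with
  | zero =>
    fin_cases i <;> simp only [Apart, tightSchedule, Fin.zero_eta, Fin.mk_one, Fin.reduceFinMk,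
        Fin.cases_zero, Matrix.cons_val, jobTime_tight_inl, jobTime_tight_inr_zero] <;>
      first | (left; linarith) | (right; linarith)
  | succ c =>
    have := slot_nonneg c; have := slot_le_one c
    fin_cases i <;> simp only [Apart, tightSchedule, Fin.zero_eta, Fin.mk_one, Fin.reduceFinMk,
        Fin.cases_succ, Matrix.cons_val, jobTime_tight_inl, jobTime_tight_inr_succ] <;>
      first | (left; linarith) | (right; linarith)

lemma tightSchedule_apart_long_short (hℓ : 2 ≤ ℓ) (hk : 2 ≤ k) (i : Fin 3) (c : Fin k) :
    Apart (tightSchedule ℓ k (.inr 0) i) (τ (.inr 0))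
      (tightSchedule ℓ k (.inr c.succ) i) (τ (.inr c.succ)) := by
  obtain ⟨hs, hs1⟩ := one_div_cast_sub_one_mem_Ioc hℓ
  obtain ⟨hr, hr1⟩ := one_div_cast_sub_one_mem_Ioc hk
  have := slot_nonneg c; have := slot_le_one c
  fin_cases i <;> simp only [Apart, tightSchedule, Fin.zero_eta, Fin.mk_one, Fin.reduceFinMk,
      Fin.cases_zero, Fin.cases_succ, Matrix.cons_val, jobTime_tight_inr_zero,
      jobTime_tight_inr_succ] <;>
    first | (left; linarith) | (right; linarith)

lemma tightSchedule_apart_short_short (i : Fin 3) {c c' : Fin k} (h : c < c') :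
    Apart (tightSchedule ℓ k (.inr c.succ) i) (τ (.inr c.succ))
      (tightSchedule ℓ k (.inr c'.succ) i) (τ (.inr c'.succ)) := by
  have := slot_add_le h
  left
  fin_cases i <;> simp only [tightSchedule, Fin.zero_eta, Fin.mk_one, Fin.reduceFinMk,
      Fin.cases_succ, Matrix.cons_val, jobTime_tight_inr_succ] <;> linarith

lemma tightSchedule_apart (hℓ : 2 ≤ ℓ) (hk : 2 ≤ k) (i : Fin 3)
    {j j' : Fin ℓ ⊕ Fin (k + 1)} (hne : j ≠ j') :
    Apart (tightSchedule ℓ k j i) (τ j) (tightSchedule ℓ k j' i) (τ j') := by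
  rcases j with a | b <;> rcases j' with a' | b'
  · rcases lt_or_gt_of_ne fun h => hne (congrArg Sum.inl h) with h | h
    · exact tightSchedule_apart_flow_flow i h
    · exact (tightSchedule_apart_flow_flow i h).symm
  · exact tightSchedule_apart_flow_open hℓ hk i a b'
  · exact (tightSchedule_apart_flow_open hℓ hk i a' b).symm
  · cases b using Fin.cases with
    | zero => cases b' using Fin.cases with
      | zero => exact absurd rfl hne
      | succ c' => exact tightSchedule_apart_long_short hℓ hk i c'
    | succ c => cases b' using Fin.cases with
      | zero => exact (tightSchedule_apart_long_short hℓ hk i c).symm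
      | succ c' =>
        rcases lt_or_gt_of_ne fun h => hne (congrArg (Sum.inr ∘ Fin.succ) h) with h | h
        · exact tightSchedule_apart_short_short i h
        · exact (tightSchedule_apart_short_short i h).symm

lemma feasible_tightSchedule (hℓ : 2 ≤ ℓ) (hk : 2 ≤ k) :
    Feasible (tightF ℓ k) (tightO ℓ k) (tightp ℓ k) (tightq ℓ k) (tightSchedule ℓ k) := by
  refine ⟨fun j _ i => (tightSchedule_mem hℓ hk j i).1,
    fun i j _ j' _ hne => tightSchedule_apart hℓ hk i hne,
    fun j _ i i' hii' => tightSchedule_apart_self hℓ hk j hii', ?_⟩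
  intro j hj
  obtain ⟨a, -, rfl⟩ := mem_image.mp hj
  have := (one_div_cast_sub_one_mem_Ioc hℓ).2
  have := (one_div_cast_sub_one_mem_Ioc hk).1
  simp only [tightp, tightSchedule, Matrix.cons_val]
  constructor <;> linarith

lemma makespan_tightSchedule (hℓ : 2 ≤ ℓ) (hk : 2 ≤ k) :
    makespan (tightF ℓ k) (tightO ℓ k) (tightp ℓ k) (tightq ℓ k) (tightSchedule ℓ k)
      = 3 + 1 / ((ℓ : ℝ) - 1) + 1 / ((k : ℝ) - 1) := by
  refine makespan_eq_of_isGreatest ⟨.inr 0, by simp [tightO], 0, ?_⟩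
    fun j _ i => (tightSchedule_mem hℓ hk j i).2
  simp only [tightSchedule, Fin.cases_zero, Matrix.cons_val, jobTime_tight_inr_zero]
  ring

lemma tightF_disjoint_tightO (ℓ k : ℕ) : Disjoint (tightF ℓ k) (tightO ℓ k) := by
  simp only [tightF, tightO, disjoint_left, mem_image]
  rintro _ ⟨a, -, rfl⟩ ⟨b, -, h⟩
  exact Sum.inr_ne_inl h

lemma tightq_nonneg (hk : 2 ≤ k) (j : Fin ℓ ⊕ Fin (k + 1)) : 0 ≤ tightq ℓ k j := by
  rcases j with a | b
  · exact zero_le_one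
  · simp only [tightq, Sum.elim_inr]
    split_ifs
    exacts [zero_le_one, (one_div_cast_sub_one_mem_Ioc hk).1.le]

lemma sum_tightp_add_sum_tightq (hℓ : 2 ≤ ℓ) (hk : 2 ≤ k) :
    ∑ j ∈ tightF ℓ k, tightp ℓ k j + ∑ j ∈ tightO ℓ k, tightq ℓ k j
      = 3 + 1 / ((ℓ : ℝ) - 1) + 1 / ((k : ℝ) - 1) := by
  have hℓ' : (ℓ : ℝ) - 1 ≠ 0 := (one_div_pos.mp (one_div_cast_sub_one_mem_Ioc hℓ).1).ne'
  have hk' : (k : ℝ) - 1 ≠ 0 := (one_div_pos.mp (one_div_cast_sub_one_mem_Ioc hk).1).ne'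
  simp only [tightF, tightO, sum_image Sum.inl_injective.injOn,
    sum_image Sum.inr_injective.injOn, tightp, tightq, Sum.elim_inr, Fin.sum_univ_succ,
    Fin.succ_ne_zero, ↓reduceIte, sum_const, card_univ, Fintype.card_fin, nsmul_eq_mul]
  field_simp
  ring

end TightInstance

/-- For the tight-example instance with `ℓ ≥ 2` and `k ≥ 2` there is a feasible schedule
of makespan exactly `P(F) + Q(O) = 3 + 1/(ℓ−1) + 1/(k−1)`, and it is optimal since
every feasible schedule has makespan at least `P(F) + Q(O)`. -/
theorem stmt11 (ℓ k : ℕ) (hℓ : 2 ≤ ℓ) (hk : 2 ≤ k) :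
    (∑ j ∈ tightF ℓ k, tightp ℓ k j) + (∑ j ∈ tightO ℓ k, tightq ℓ k j)
      = 3 + 1 / ((ℓ : ℝ) - 1) + 1 / ((k : ℝ) - 1) ∧
    ∃ S : (Fin ℓ ⊕ Fin (k + 1)) → Fin 3 → ℝ,
      Feasible (tightF ℓ k) (tightO ℓ k) (tightp ℓ k) (tightq ℓ k) S ∧
      makespan (tightF ℓ k) (tightO ℓ k) (tightp ℓ k) (tightq ℓ k) S
        = 3 + 1 / ((ℓ : ℝ) - 1) + 1 / ((k : ℝ) - 1) ∧
      (∀ S' : (Fin ℓ ⊕ Fin (k + 1)) → Fin 3 → ℝ,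
        Feasible (tightF ℓ k) (tightO ℓ k) (tightp ℓ k) (tightq ℓ k) S' →
          (∑ j ∈ tightF ℓ k, tightp ℓ k j) + (∑ j ∈ tightO ℓ k, tightq ℓ k j)
            ≤ makespan (tightF ℓ k) (tightO ℓ k) (tightp ℓ k) (tightq ℓ k) S') ∧
      (∀ S' : (Fin ℓ ⊕ Fin (k + 1)) → Fin 3 → ℝ,
        Feasible (tightF ℓ k) (tightO ℓ k) (tightp ℓ k) (tightq ℓ k) S' →
          makespan (tightF ℓ k) (tightO ℓ k) (tightp ℓ k) (tightq ℓ k) S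
            ≤ makespan (tightF ℓ k) (tightO ℓ k) (tightp ℓ k) (tightq ℓ k) S') := by
  have htotal := sum_tightp_add_sum_tightq hℓ hk
  have hmakespan := makespan_tightSchedule hℓ hk
  have hlower : ∀ S', Feasible (tightF ℓ k) (tightO ℓ k) (tightp ℓ k) (tightq ℓ k) S' →
      ∑ j ∈ tightF ℓ k, tightp ℓ k j + ∑ j ∈ tightO ℓ k, tightq ℓ k j
        ≤ makespan (tightF ℓ k) (tightO ℓ k) (tightp ℓ k) (tightq ℓ k) S' :=
    fun _ => sum_add_sum_le_makespan (tightF_disjoint_tightO ℓ k)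
      (fun _ _ => (one_div_cast_sub_one_mem_Ioc hℓ).1.le) fun j _ => tightq_nonneg hk j
  exact ⟨htotal, tightSchedule ℓ k, feasible_tightSchedule hℓ hk, hmakespan, hlower,
    fun S' hS' => hmakespan.trans_le (htotal ▸ hlower S' hS')⟩
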